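/- arXiv:2301.01498 — 8 statements merged into one kernel-verified Lean document; each statement's English description precedes it below -/
import Mathlib

section
/- Let $n\ge 5$ and let $v_1,\dots,v_n=v_0\in\mathbb{Z}^2$ be the rays (in clockwise order) of a complete nonsingular fan of rank 2 containing the cones generated by $\{(1,0),(0,1)\}$ and $\{(-1,0),(0,-1)\}$, with $v_1=(1,0)$, $v_{n-2}=(0,-1)$, $v_{n-1}=(-1,0)$, $v_n=(0,1)$, and quiddity sequence $a_i$ defined by $a_i v_i = v_{i-1}+v_{i+1}$. Then there exists an index $i$ with $2\le i\le n-3$ such that $a_i=1$. -/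
/-!
The linear form `height (x, y) = x - y` is positive on every nonzero ray of the closed fourth
quadrant and equals `1` on `(1,0)` and `(0,-1)`, while it is at least `2` on the ray before
`(0,-1)`. Hence it has a peak at some interior index `i`:
`height (v (i-1)) ≤ height (v i) > height (v (i+1))`. The quiddity relation is linear, so
`a i * height (v i) = height (v (i-1)) + height (v (i+1))` lies strictly between `0` and
`2 * height (v i)`, which forces `a i = 1`.
-/

namespace Fan

def det (p q : ℤ × ℤ) : ℤ := p.1 * q.2 - p.2 * q.1

def height (p : ℤ × ℤ) : ℤ := p.1 - p.2

@[simp] lemma height_mk (x y : ℤ) : height (x, y) = x - y := rfl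

lemma height_mul_eq_add_of_smul_eq_add {a : ℤ} {p q r : ℤ × ℤ} (h : a • p = q + r) :
    a * height p = height q + height r := by
  obtain ⟨h1, h2⟩ := Prod.ext_iff.mp h
  simp only [Prod.smul_fst, Prod.smul_snd, Prod.fst_add, Prod.snd_add, smul_eq_mul] at h1 h2
  simp only [height]
  linear_combination h1 - h2

lemma height_pos_of_det_eq_neg_one {p q : ℤ × ℤ} (hp : 0 ≤ p.1 ∧ p.2 ≤ 0)
    (hpq : det p q = -1) : 0 < height p := by
  by_contra! h
  obtain ⟨x, y⟩ := p
  obtain rfl : x = 0 := by simp only [height_mk] at h; omega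
  obtain rfl : y = 0 := by simp only [height_mk] at h; omega
  simp [det] at hpq

/-- A quadrant ray `p` preceding `(0,-1)` is `(1, y)`; `y = 0` would force its predecessor `q`
out of the lower half-plane. -/
lemma one_lt_height_of_det_eq_neg_one {q p : ℤ × ℤ} (hq : q.2 ≤ 0) (hp : p.2 ≤ 0)
    (hqp : det q p = -1) (hp_next : det p (0, -1) = -1) : 1 < height p := by
  obtain ⟨x, y⟩ := p
  simp only [det] at hqp hp_next
  obtain rfl : x = 1 := by linarith
  rcases hp.lt_or_eq with hy | rfl
  · simp only [height_mk]; omega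
  · simp at hqp; omega

lemma exists_peak {α : Type*} [LinearOrder α] (f : ℕ → α) {lo hi : ℕ} (hlt : lo < hi)
    (hlo : f lo ≤ f (lo + 1)) (hhi : f (hi + 1) < f hi) :
    ∃ i, lo < i ∧ i ≤ hi ∧ f (i - 1) ≤ f i ∧ f (i + 1) < f i := by
  induction hi, hlt using Nat.le_induction with
  | base => exact ⟨lo + 1, by omega, le_rfl, hlo, hhi⟩
  | succ hi hlt ih =>
    rcases lt_or_ge (f (hi + 1)) (f hi) with hdesc | hasc
    · obtain ⟨i, hi_lo, hi_hi, hprev, hnext⟩ := ih hdesc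
      exact ⟨i, hi_lo, by omega, hprev, hnext⟩
    · exact ⟨hi + 1, by omega, le_rfl, hasc, hhi⟩

lemma eq_one_of_mul_eq_add {a x y z : ℤ} (hx : 0 < x) (hxz : x ≤ z) (hy : 0 < y) (hyz : y < z)
    (h : a * z = x + y) : a = 1 := by
  have : 0 < a := by nlinarith
  have : a < 2 := by nlinarith
  omega

end Fan

open Fan in
theorem stmt_0_general (n : ℕ) (hn : 5 ≤ n) (v : ℕ → ℤ × ℤ) (a : ℕ → ℤ)
    (hv1 : v 1 = (1, 0))
    (hvn2 : v (n - 2) = (0, -1))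
    -- consecutive rays form a `ℤ`-basis, in clockwise orientation
    (hbasis : ∀ i < n, (v i).1 * (v (i + 1)).2 - (v i).2 * (v (i + 1)).1 = -1)
    -- the rays from `(1,0)` to `(-1,0)` lie in the closed fourth quadrant
    (hquad : ∀ i, 1 ≤ i → i ≤ n - 2 → 0 ≤ (v i).1 ∧ (v i).2 ≤ 0)
    -- quiddity relations
    (hrec : ∀ i, 1 ≤ i → i ≤ n - 1 → a i • v i = v (i - 1) + v (i + 1)) :
    ∃ i, 2 ≤ i ∧ i ≤ n - 3 ∧ a i = 1 := by
  have hpos : ∀ j, 1 ≤ j → j ≤ n - 2 → 0 < height (v j) := fun j h1 h2 =>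
    height_pos_of_det_eq_neg_one (hquad j h1 h2) (hbasis j (by omega))
  have hstart : height (v 1) ≤ height (v 2) := by
    have := hpos 2 (by omega) (by omega)
    rw [hv1, height_mk]
    omega
  have hend : height (v (n - 3 + 1)) < height (v (n - 3)) := by
    have hsucc : n - 3 + 1 = n - 2 := by omega
    have hpred : n - 4 + 1 = n - 3 := by omega
    have hlast := hbasis (n - 3) (by omega)
    have hprev := hbasis (n - 4) (by omega)
    rw [hsucc, hvn2] at hlast
    rw [hpred] at hprev
    rw [hsucc, hvn2, height_mk]
    exact one_lt_height_of_det_eq_neg_one (hquad (n - 4) (by omega) (by omega)).2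
      (hquad (n - 3) (by omega) (by omega)).2 hprev hlast
  obtain ⟨i, hlo, hhi, hprev, hnext⟩ :=
    exists_peak (fun j => height (v j)) (by omega : 1 < n - 3) hstart hend
  refine ⟨i, hlo, hhi, eq_one_of_mul_eq_add (hpos (i - 1) (by omega) (by omega)) hprev
    (hpos (i + 1) (by omega) (by omega)) hnext ?_⟩
  exact height_mul_eq_add_of_smul_eq_add (hrec i (by omega) (by omega))

/-- Let `n ≥ 5` and let `v 1, …, v n = v 0` be the rays (in clockwise
order) of a complete nonsingular fan of rank 2 containing `cone{(1,0),(0,1)}` and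
`cone{(-1,0),(0,-1)}`, with `v 1 = (1,0)`, `v (n-2) = (0,-1)`, `v (n-1) = (-1,0)`,
`v n = v 0 = (0,1)`, and quiddity sequence `a` defined by `a i • v i = v (i-1) + v (i+1)`.
Then there is an index `i` with `2 ≤ i ≤ n-3` and `a i = 1`. -/
theorem stmt_0 (n : ℕ) (hn : 5 ≤ n) (v : ℕ → ℤ × ℤ) (a : ℕ → ℤ)
    (hv0 : v 0 = (0, 1)) (hv1 : v 1 = (1, 0))
    (hvn2 : v (n - 2) = (0, -1)) (hvn1 : v (n - 1) = (-1, 0)) (hvn : v n = (0, 1))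
    -- consecutive rays form a `ℤ`-basis, in clockwise orientation
    (hbasis : ∀ i < n, (v i).1 * (v (i + 1)).2 - (v i).2 * (v (i + 1)).1 = -1)
    -- the rays from `(1,0)` to `(-1,0)` lie in the closed fourth quadrant
    (hquad : ∀ i, 1 ≤ i → i ≤ n - 2 → 0 ≤ (v i).1 ∧ (v i).2 ≤ 0)
    -- quiddity relations
    (hrec : ∀ i, 1 ≤ i → i ≤ n - 1 → a i • v i = v (i - 1) + v (i + 1)) :
    ∃ i, 2 ≤ i ∧ i ≤ n - 3 ∧ a i = 1 :=
  stmt_0_general n hn v a hv1 hvn2 hbasis hquad hrec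
end

section
/- Suppose $v_1=(1,0), v_2,\dots,v_{n-2}=(0,-1)$ are lattice vectors in $\mathbb{Z}^2$ such that each consecutive pair forms a $\mathbb{Z}$-basis, written $v_i=(x_i,y_i)$, and integers $a_2,\dots,a_{n-3}$ satisfy $a_i v_i = v_{i-1}+v_{i+1}$ with $x_i> 0$ for $2\le i\le n-3$. If $a_i\ge 2$ for all $2\le i\le n-3$, then the sequence $x_1\le x_2\le\cdots\le x_{n-3}$ is nondecreasing, contradicting $x_{n-2}=0$; hence $n\le 4$. -/
/-! Since `a i ≥ 2` and `x i ≥ 0`, the recursion gives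
`x (i+1) - x i = (a i - 2) * x i + (x i - x (i-1)) ≥ x i - x (i-1)`, so the increments of the
first coordinates never decrease; the first one, `x 2 - 1`, is nonnegative because `x 2 > 0`.
Hence `x (n-3) ≤ x (n-2) = 0`, against `x (n-3) > 0`. -/

theorem le_of_mul_eq_add_of_le {a p q r : ℤ} (ha : 2 ≤ a) (hq : 0 ≤ q)
    (hrec : a * q = p + r) (hpq : p ≤ q) : q ≤ r := by
  nlinarith

theorem le_succ_of_mul_eq_add {x a : ℕ → ℤ} {m N : ℕ} (hstart : x m ≤ x (m + 1))
    (hrec : ∀ i, m ≤ i → i < N → a (i + 1) * x (i + 1) = x i + x (i + 2))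
    (ha : ∀ i, m ≤ i → i < N → 2 ≤ a (i + 1))
    (hx : ∀ i, m ≤ i → i < N → 0 ≤ x (i + 1)) :
    ∀ i, m ≤ i → i ≤ N → x i ≤ x (i + 1) := by
  intro i hmi
  induction i, hmi using Nat.le_induction with
  | base => exact fun _ => hstart
  | succ i hmi ih =>
    intro hiN
    exact le_of_mul_eq_add_of_le (ha i hmi hiN) (hx i hmi hiN) (hrec i hmi hiN)
      (ih (Nat.le_of_lt hiN))

theorem stmt_1_general (n : ℕ) (v : ℕ → ℤ × ℤ) (a : ℕ → ℤ)
    (hv1 : v 1 = (1, 0)) (hvn2 : v (n - 2) = (0, -1))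
    (hx : ∀ i, 2 ≤ i → i ≤ n - 3 → 0 < (v i).1)
    (hrec : ∀ i, 2 ≤ i → i ≤ n - 3 → a i • v i = v (i - 1) + v (i + 1))
    (ha : ∀ i, 2 ≤ i → i ≤ n - 3 → 2 ≤ a i) :
    (5 ≤ n → ∀ i, 1 ≤ i → i ≤ n - 3 → (v i).1 ≤ (v (i + 1)).1) ∧ n ≤ 4 := by
  have mono : 5 ≤ n → ∀ i, 1 ≤ i → i ≤ n - 3 → (v i).1 ≤ (v (i + 1)).1 := by
    intro hn
    refine le_succ_of_mul_eq_add (a := a) ?_ (fun i hi hiN => ?_)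
      (fun i hi hiN => ha (i + 1) (by omega) hiN)
      (fun i hi hiN => (hx (i + 1) (by omega) hiN).le)
    · rw [hv1]
      exact hx 2 le_rfl (by omega)
    · simpa using congrArg Prod.fst (hrec (i + 1) (by omega) hiN)
  refine ⟨mono, ?_⟩
  by_contra! hn
  have hlast := mono hn (n - 3) (by omega) le_rfl
  rw [show n - 3 + 1 = n - 2 by omega, hvn2] at hlast
  exact (hx (n - 3) (by omega) le_rfl).not_ge hlast

/-- Suppose `v 1 = (1,0), v 2, …, v (n-2) = (0,-1)` are lattice vectors
in `ℤ²` such that each consecutive pair forms a `ℤ`-basis, with `x i := (v i).1 > 0` for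
`2 ≤ i ≤ n-3`, and integers `a i` satisfy `a i • v i = v (i-1) + v (i+1)` for
`2 ≤ i ≤ n-3`.  If `a i ≥ 2` for all `2 ≤ i ≤ n-3`, then the first coordinates are
nondecreasing (for `5 ≤ n`), contradicting `(v (n-2)).1 = 0`; hence `n ≤ 4`. -/
theorem stmt_1 (n : ℕ) (v : ℕ → ℤ × ℤ) (a : ℕ → ℤ)
    (hv1 : v 1 = (1, 0)) (hvn2 : v (n - 2) = (0, -1))
    (hbasis : ∀ i, 1 ≤ i → i ≤ n - 3 →
      (v i).1 * (v (i + 1)).2 - (v i).2 * (v (i + 1)).1 = -1)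
    (hx : ∀ i, 2 ≤ i → i ≤ n - 3 → 0 < (v i).1)
    (hrec : ∀ i, 2 ≤ i → i ≤ n - 3 → a i • v i = v (i - 1) + v (i + 1))
    (ha : ∀ i, 2 ≤ i → i ≤ n - 3 → 2 ≤ a i) :
    (5 ≤ n → ∀ i, 1 ≤ i → i ≤ n - 3 → (v i).1 ≤ (v (i + 1)).1) ∧ n ≤ 4 :=
  stmt_1_general n v a hv1 hvn2 hx hrec ha
end

section
/- An integer sequence $(a_1,\dots,a_n)$ is the quiddity sequence of a nonsingular complete fan of rank 2 only if $\sum_{i=1}^n a_i = 3n-12$ and the product of matrices $\begin{pmatrix}0&-1\\1&a_1\end{pmatrix}\begin{pmatrix}0&-1\\1&a_2\end{pmatrix}\cdots\begin{pmatrix}0&-1\\1&a_n\end{pmatrix}$ equals the identity matrix. -/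
open Matrix

/-- If `(a 1, …, a n)` is the quiddity sequence of a nonsingular complete
fan of rank 2 — i.e. there are rays `v 0, v 1, …, v n = v 0` (cyclically, `v (n+1) = v 1`)
with each consecutive pair a `ℤ`-basis of `ℤ²` and `a i • v i = v (i-1) + v (i+1)` —
then the product `⟨0,-1;1,a 1⟩ ⋯ ⟨0,-1;1,a n⟩` of `2×2` matrices is the identity. -/
theorem stmt_2 (n : ℕ) (hn : 1 ≤ n) (v : ℕ → ℤ × ℤ) (a : ℕ → ℤ)
    (hvn : v n = v 0) (hvn1 : v (n + 1) = v 1)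
    (hbasis : ∀ i ≤ n, (v i).1 * (v (i + 1)).2 - (v i).2 * (v (i + 1)).1 = 1 ∨
      (v i).1 * (v (i + 1)).2 - (v i).2 * (v (i + 1)).1 = -1)
    (hrec : ∀ i, 1 ≤ i → i ≤ n → a i • v i = v (i - 1) + v (i + 1)) :
    ((List.range n).map (fun i => !![0, -1; 1, a (i + 1)])).prod
      = (1 : Matrix (Fin 2) (Fin 2) ℤ) := by
  set V : ℕ → Matrix (Fin 2) (Fin 2) ℤ :=
    fun i => !![(v i).1, (v (i + 1)).1; (v i).2, (v (i + 1)).2] with hV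
  have step : ∀ i < n, V i * !![0, -1; 1, a (i + 1)] = V (i + 1) := by
    intro i hi
    have h := hrec (i + 1) (Nat.le_add_left 1 i) hi
    simp only [Nat.add_sub_cancel] at h
    have h1 : a (i + 1) * (v (i + 1)).1 = (v i).1 + (v (i + 2)).1 := by
      have := congrArg Prod.fst h; simpa using this
    have h2 : a (i + 1) * (v (i + 1)).2 = (v i).2 + (v (i + 2)).2 := by
      have := congrArg Prod.snd h; simpa using this
    ext r c
    fin_cases r <;> fin_cases c <;>
      simp [hV, Matrix.mul_apply, Fin.sum_univ_two] <;> linarith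
  have key : ∀ k ≤ n, V 0 * ((List.range k).map (fun i => !![0, -1; 1, a (i + 1)])).prod = V k := by
    intro k hk
    induction k with
    | zero => simp
    | succ m ih =>
      rw [List.range_succ, List.map_append, List.prod_append, ← Matrix.mul_assoc,
        ih (Nat.le_of_succ_le hk)]
      simpa using step m hk
  have hVn : V n = V 0 := by simp [hV, hvn, hvn1]
  have hkey := key n le_rfl
  rw [hVn] at hkey
  have hdet : IsUnit (V 0).det := by
    have h := hbasis 0 (Nat.zero_le n)
    have hd : (V 0).det = (v 0).1 * (v 1).2 - (v 0).2 * (v 1).1 := by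
      simp [hV, Matrix.det_fin_two_of]; ring
    rcases h with h | h <;> rw [hd, h]
    · exact isUnit_one
    · exact isUnit_one.neg
  calc ((List.range n).map (fun i => !![0, -1; 1, a (i + 1)])).prod
      = (V 0)⁻¹ * (V 0 * ((List.range n).map (fun i => !![0, -1; 1, a (i + 1)])).prod) := by
        rw [← Matrix.mul_assoc, Matrix.nonsing_inv_mul _ hdet, Matrix.one_mul]
    _ = (V 0)⁻¹ * V 0 := by rw [hkey]
    _ = 1 := Matrix.nonsing_inv_mul _ hdet
end

section
/- Let $A$ be a local finite-dimensional $k$-algebra with $A/J_A\cong k$, and $X$ a nonzero $(A,k)$-bimodule (i.e. an $A^{op}$-module) with a single generator $h$, so $X=Ah$. Let $x=(x_1,\dots,x_t)\in X^t$ be such that $X^t = A\cdot(x_1,\dots,x_t) + (x_1,\dots,x_t)\cdot M_t(k)$ (rigidity condition). Then, after replacing $x$ by $a\cdot x\cdot g$ for suitable $a\in A^\times$ and $g\in GL_t(k)$, one can assume $x_1=h$ and $x_i\in J_A h$ for $2\le i\le t$, and moreover $(J_A X)^{t-1} = A\cdot(x_2,\dots,x_t) + (x_2,\dots,x_t)\cdot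 M_{t-1}(k)$. -/
/-!
Write `X = A h` and let `J` be the set of nonunits of `A`; finite dimensionality makes `A`
Dedekind-finite, so `J` is an ideal. By Nakayama, a rigid tuple has an entry outside `J h`, that
is, a unit multiple of `h`. A column swap, rescaling by that unit and subtracting scalar multiples
of the new first entry from the others (possible since `A = k + J`) bring the tuple to the form
`(h, x₁, …, xₜ)` with `xⱼ ∈ J h`, and this preserves rigidity. Given `y ∈ (J X)ᵗ`, rigidity applied
to `(0, y)` writes `y` in terms of the tuple, with an extra term `λⱼ h` (`λⱼ ∈ k`) in each entry;
it lies in `J h`, which forces `λⱼ = 0` because `h ≠ 0`.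
-/

namespace IsLocalRing

variable (A : Type*) [Ring A] [IsLocalRing A] [IsDedekindFiniteMonoid A]

def nonunitsIdeal : Ideal A where
  carrier := nonunits A
  add_mem' := nonunits_add
  zero_mem' := zero_mem_nonunits.2 zero_ne_one
  smul_mem' _ _ hx hcx := hx (IsUnit.mul_iff.1 hcx).2

def nonunitsSMul {X : Type*} [AddCommGroup X] [Module A X] (h : X) : Submodule A X :=
  Submodule.map (LinearMap.toSpanSingleton A X h) (nonunitsIdeal A)

variable {A} {X : Type*} [AddCommGroup X] [Module A X]

theorem mem_nonunitsSMul {h z : X} : z ∈ nonunitsSMul A h ↔ ∃ c : A, ¬IsUnit c ∧ c • h = z :=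
  Iff.rfl

theorem smul_mem_nonunitsSMul {c : A} (hc : ¬IsUnit c) (h : X) : c • h ∈ nonunitsSMul A h :=
  ⟨c, hc, rfl⟩

theorem eq_zero_of_isUnit_smul_mem_nonunitsSMul {c : A} (hc : IsUnit c) {h : X}
    (hch : c • h ∈ nonunitsSMul A h) : h = 0 := by
  obtain ⟨d, hd, hdh⟩ := mem_nonunitsSMul.1 hch
  have hcd : IsUnit (c - d) :=
    (isUnit_or_isUnit_of_isUnit_add (by rwa [sub_add_cancel])).resolve_right hd
  rwa [← hcd.smul_eq_zero, sub_smul, sub_eq_zero, eq_comm]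

theorem span_nonunits_smul_le {h : X} (hgen : ∀ y : X, ∃ a : A, y = a • h) :
    Submodule.span A {z : X | ∃ (c : A) (w : X), ¬IsUnit c ∧ z = c • w} ≤ nonunitsSMul A h := by
  rw [Submodule.span_le]
  rintro _ ⟨c, w, hc, rfl⟩
  obtain ⟨a, rfl⟩ := hgen w
  rw [smul_smul]
  exact smul_mem_nonunitsSMul (fun hca => hc (IsUnit.mul_iff.1 hca).1) h

end IsLocalRing

section RowMul

variable {k X n : Type*} [CommSemiring k] [AddCommMonoid X] [Module k X] [Fintype n]

def rowMul (x : n → X) (g : Matrix n n k) : n → X :=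
  fun j => ∑ i, g i j • x i

@[simp]
theorem rowMul_one [DecidableEq n] (x : n → X) : rowMul x (1 : Matrix n n k) = x := by
  ext j
  simp [rowMul, Matrix.one_apply, ite_smul]

theorem rowMul_rowMul (x : n → X) (g g' : Matrix n n k) :
    rowMul (rowMul x g) g' = rowMul x (g * g') := by
  ext j
  simp only [rowMul, Matrix.mul_apply, Finset.smul_sum, Finset.sum_smul, smul_smul]
  rw [Finset.sum_comm]
  simp only [mul_comm]

theorem rowMul_add (x y : n → X) (g : Matrix n n k) :
    rowMul (x + y) g = rowMul x g + rowMul y g := by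
  ext j
  simp [rowMul, Finset.sum_add_distrib]

theorem smul_rowMul {A : Type*} [Monoid A] [DistribMulAction A X] [SMulCommClass k A X]
    (a : A) (x : n → X) (g : Matrix n n k) : rowMul (a • x) g = a • rowMul x g := by
  ext j
  simp [rowMul, Finset.smul_sum, smul_comm (g _ j)]

theorem rowMul_swap [DecidableEq n] (x : n → X) (i j : n) :
    rowMul x (Matrix.swap k i j) = x ∘ Equiv.swap i j := by
  ext l
  simp [rowMul, Matrix.swap, Equiv.toPEquiv_apply, ite_smul, Equiv.swap_apply_eq_iff]

theorem rowMul_mem {A : Type*} [Semiring A] [Module A X] [Algebra k A] [IsScalarTower k A X]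
    {N : Submodule A X} {x : n → X} (hx : ∀ i, x i ∈ N) (g : Matrix n n k) (j : n) :
    rowMul x g j ∈ N :=
  N.sum_mem fun i _ => N.smul_of_tower_mem _ (hx i)

end RowMul

section Rigidity

variable (k : Type*) {A X n : Type*} [CommSemiring k] [Semiring A] [Algebra k A]
  [AddCommMonoid X] [Module A X] [Module k X] [IsScalarTower k A X] [Fintype n]

/-- The paper's rigidity `Nⁿ = A·x + x·Mₙ(k)`, of which only the inclusion `⊆` is recorded. -/
def IsRigidIn (N : Submodule A X) (x : n → X) : Prop :=
  ∀ y : n → X, (∀ j, y j ∈ N) → ∃ (c : A) (m : Matrix n n k), y = c • x + rowMul x m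

variable {k}

theorem IsRigidIn.units_smul_rowMul [DecidableEq n] {N : Submodule A X} {x : n → X}
    (hx : IsRigidIn k N x) (a : Aˣ) (g : GL n k) :
    IsRigidIn k N ((a : A) • rowMul x (g : Matrix n n k)) := by
  intro y hy
  obtain ⟨c, m, hcm⟩ := hx (((a⁻¹ : Aˣ) : A) • rowMul y (↑g⁻¹ : Matrix n n k))
    fun j => N.smul_mem _ (rowMul_mem hy _ j)
  refine ⟨a * c * ↑a⁻¹, (↑g⁻¹ : Matrix n n k) * m * (↑g : Matrix n n k), ?_⟩
  have hy' : y = (a : A) •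
      rowMul (((a⁻¹ : Aˣ) : A) • rowMul y (↑g⁻¹ : Matrix n n k)) (↑g : Matrix n n k) := by
    rw [smul_rowMul, rowMul_rowMul, smul_smul, Units.mul_inv, one_smul, ← Units.val_mul,
      inv_mul_cancel, Units.val_one, rowMul_one]
  rw [hy', hcm, rowMul_add, smul_rowMul, smul_add, smul_smul, rowMul_rowMul, smul_rowMul,
    rowMul_rowMul, smul_smul, Units.inv_mul_cancel_right, ← mul_assoc, Units.mul_inv_cancel_left]

theorem IsRigidIn.eq_top_of_forall_mem {x : n → X} (hx : IsRigidIn k (⊤ : Submodule A X) x)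
    (j : n) {N : Submodule A X} (hN : ∀ i, x i ∈ N) : N = ⊤ := by
  refine N.eq_top_iff'.2 fun z => ?_
  obtain ⟨c, m, hcm⟩ := hx (fun _ => z) fun _ => Submodule.mem_top
  rw [show z = (c • x + rowMul x m) j from congrFun hcm j]
  exact N.add_mem (N.smul_mem c (hN j)) (rowMul_mem hN m j)

end Rigidity

section Shear

variable {k X n : Type*} [CommRing k] [AddCommGroup X] [Module k X] [Fintype n]

theorem exists_rowMul_eq_sub_smul [DecidableEq n] (e : n) (lam : n → k) :
    ∃ g : GL n k, ∀ x : n → X, rowMul x (g : Matrix n n k) e = x e ∧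
      ∀ j ≠ e, rowMul x (g : Matrix n n k) j = x j - lam j • x e := by
  set N : Matrix n n k := Matrix.of fun i j => if i = e ∧ j ≠ e then lam j else 0
  have hN : N * N = 0 := by
    ext i j
    refine Finset.sum_eq_zero fun l _ => ?_
    by_cases hl : l = e <;> simp [N, hl]
  refine ⟨(IsNilpotent.isUnit_one_sub ⟨2, by rw [pow_two, hN]⟩).unit, fun x => ?_⟩
  have hrow : ∀ j, rowMul x (1 - N) j = x j - if j = e then 0 else lam j • x e := by
    intro j
    simp [rowMul, N, sub_smul, Finset.sum_sub_distrib, Matrix.one_apply, ite_smul, ite_and]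
  exact ⟨by simpa using hrow e, fun j hj => by simpa [hj] using hrow j⟩

end Shear

section LocalAlgebra

open IsLocalRing

variable {A X : Type*} [Ring A] [IsLocalRing A] [IsDedekindFiniteMonoid A] [AddCommGroup X]
  [Module A X] {h : X}

theorem IsRigidIn.exists_not_mem_nonunitsSMul {k n : Type*} [CommSemiring k] [Algebra k A]
    [Module k X] [IsScalarTower k A X] [Fintype n] {x : n → X}
    (hx : IsRigidIn k (⊤ : Submodule A X) x) (j : n) (hh : h ≠ 0) :
    ∃ i, x i ∉ nonunitsSMul A h := by
  by_contra! hJ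
  refine hh (eq_zero_of_isUnit_smul_mem_nonunitsSMul (isUnit_one (M := A)) ?_)
  rw [one_smul, hx.eq_top_of_forall_mem j hJ]
  exact Submodule.mem_top

theorem exists_units_smul_rowMul_normalized {k n : Type*} [CommRing k] [Algebra k A] [Module k X]
    [IsScalarTower k A X] [Fintype n] [DecidableEq n]
    (hres : ∀ a : A, ∃ c : k, ¬IsUnit (a - algebraMap k A c))
    (hgen : ∀ y : X, ∃ a : A, y = a • h) {x : n → X} (e : n) {i : n}
    (hi : x i ∉ nonunitsSMul A h) :
    ∃ (a : Aˣ) (g : GL n k), ((a : A) • rowMul x (g : Matrix n n k)) e = h ∧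
      ∀ j ≠ e, ((a : A) • rowMul x (g : Matrix n n k)) j ∈ nonunitsSMul A h := by
  obtain ⟨α, hα⟩ := hgen (x i)
  have hαu : IsUnit α := by
    by_contra hα'
    exact hi (hα ▸ smul_mem_nonunitsSMul hα' h)
  set y : n → X := ((hαu.unit⁻¹ : Aˣ) : A) • rowMul x (Matrix.swap k e i)
  have hye : y e = h := by
    simp [y, rowMul_swap, hα, smul_smul]
  choose β hβ using fun j => hgen (y j)
  choose lam hlam using fun j => hres (β j)
  obtain ⟨s, hs⟩ := exists_rowMul_eq_sub_smul (X := X) e lam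
  have hxy : ((hαu.unit⁻¹ : Aˣ) : A) •
      rowMul x ((Matrix.GeneralLinearGroup.swap k e i * s : GL n k) : Matrix n n k) =
      rowMul y (s : Matrix n n k) := by
    rw [Units.val_mul, ← rowMul_rowMul, smul_rowMul]
    rfl
  refine ⟨hαu.unit⁻¹, Matrix.GeneralLinearGroup.swap k e i * s, ?_, fun j hj => ?_⟩
  · rw [hxy, (hs y).1, hye]
  · rw [hxy, (hs y).2 j hj, hye, hβ j, ← algebraMap_smul A (lam j) h, ← sub_smul]
    exact smul_mem_nonunitsSMul (hlam j) h

theorem IsRigidIn.tail {k : Type*} [Field k] [Algebra k A] [Module k X] [IsScalarTower k A X]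
    {t : ℕ} (hh : h ≠ 0) {x : Fin (t + 1) → X}
    (hx : IsRigidIn k (⊤ : Submodule A X) x) (h0 : x 0 = h)
    (hJ : ∀ j : Fin t, x j.succ ∈ nonunitsSMul A h) {N : Submodule A X}
    (hN : N ≤ nonunitsSMul A h) : IsRigidIn k N (Fin.tail x) := by
  intro y hy
  obtain ⟨c, m, hcm⟩ := hx (Fin.cons 0 y) fun _ => Submodule.mem_top
  set m' : Matrix (Fin t) (Fin t) k := m.submatrix Fin.succ Fin.succ
  have hrow : ∀ j, y j = c • x j.succ + m 0 j.succ • h + rowMul (Fin.tail x) m' j := by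
    intro j
    simpa [rowMul, Fin.sum_univ_succ, h0, add_assoc, m', Fin.tail] using congrFun hcm j.succ
  have hm0 : ∀ j : Fin t, m 0 j.succ = 0 := by
    intro j
    by_contra hne
    refine hh (eq_zero_of_isUnit_smul_mem_nonunitsSMul
      ((isUnit_iff_ne_zero.2 hne).map (algebraMap k A)) ?_)
    have hmh : m 0 j.succ • h = y j - c • x j.succ - rowMul (Fin.tail x) m' j := by
      rw [hrow j]
      abel
    rw [algebraMap_smul, hmh]
    exact sub_mem (sub_mem (hN (hy j)) (Submodule.smul_mem _ c (hJ j))) (rowMul_mem hJ m' j)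
  refine ⟨c, m', funext fun j : Fin t => ?_⟩
  rw [hrow j, hm0 j, zero_smul, add_zero]
  rfl

end LocalAlgebra

/-- Let `A` be a local finite-dimensional `k`-algebra with residue field
`k`, and `X` a nonzero `A`-module generated by a single element `h` (so `X = A h`).
Let `x = (x 0, …, x t) ∈ X^(t+1)` satisfy the rigidity condition
`X^(t+1) = A·x + x·M_(t+1)(k)`.  Then after replacing `x` by `a • x • g` for suitable
`a ∈ Aˣ` and `g ∈ GL_(t+1)(k)` one may assume `x 0 = h` and `x j ∈ J_A h` for `j ≥ 1`,
and moreover `(J_A X)^t = A·(x 1,…,x t) + (x 1,…,x t)·M_t(k)`. -/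
theorem stmt_6 {k A X : Type*} [Field k] [Ring A] [Algebra k A] [FiniteDimensional k A]
    [IsLocalRing A] [AddCommGroup X] [Module A X]
    -- residue field `k` : every element of `A` is a scalar modulo the radical (= nonunits)
    (hres : ∀ a : A, ∃ c : k, ¬ IsUnit (a - algebraMap k A c))
    (h : X) (hh : h ≠ 0) (hgen : ∀ y : X, ∃ a : A, y = a • h)
    (t : ℕ) (x : Fin (t + 1) → X)
    (hrigid : ∀ y : Fin (t + 1) → X,
      ∃ (c : A) (m : Matrix (Fin (t + 1)) (Fin (t + 1)) k),
        ∀ j, y j = c • x j + ∑ i, algebraMap k A (m i j) • x i) :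
    ∃ (a : Aˣ) (g : GL (Fin (t + 1)) k),
      -- the transformed tuple `x' = a • (x · g)`
      (fun j => (a : A) • ∑ i, algebraMap k A ((g : Matrix (Fin (t + 1)) (Fin (t + 1)) k) i j) • x i) 0 = h ∧
      (∀ j : Fin (t + 1), j ≠ 0 →
        ∃ c : A, ¬ IsUnit c ∧
          (fun j => (a : A) • ∑ i, algebraMap k A ((g : Matrix (Fin (t + 1)) (Fin (t + 1)) k) i j) • x i) j = c • h) ∧
      -- rigidity descends to the tail `(x' 1, …, x' t)` inside `J_A X`
      (∀ y : Fin t → X,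
        (∀ j, y j ∈ Submodule.span A {z : X | ∃ (c : A) (w : X), ¬ IsUnit c ∧ z = c • w}) →
        ∃ (c : A) (m : Matrix (Fin t) (Fin t) k),
          ∀ j : Fin t, y j = c •
              ((fun j => (a : A) • ∑ i, algebraMap k A ((g : Matrix (Fin (t + 1)) (Fin (t + 1)) k) i j) • x i) j.succ)
            + ∑ i : Fin t, algebraMap k A (m i j) •
              ((fun j => (a : A) • ∑ i, algebraMap k A ((g : Matrix (Fin (t + 1)) (Fin (t + 1)) k) i j) • x i) i.succ)) := by
  have : IsArtinianRing A := .of_finite k A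
  let : Module k X := .compHom X (algebraMap k A)
  have : IsScalarTower k A X := .of_algebraMap_smul fun _ _ => rfl
  have hx : IsRigidIn k (⊤ : Submodule A X) x := fun y _ =>
    let ⟨c, m, hcm⟩ := hrigid y
    ⟨c, m, funext hcm⟩
  obtain ⟨i, hi⟩ := hx.exists_not_mem_nonunitsSMul 0 hh
  obtain ⟨a, g, h0, hJ⟩ := exists_units_smul_rowMul_normalized hres hgen 0 hi
  refine ⟨a, g, h0, fun j hj => ?_, fun y hy => ?_⟩
  · obtain ⟨c, hc, hch⟩ := hJ j hj
    exact ⟨c, hc, hch.symm⟩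
  · obtain ⟨c, m, hcm⟩ := (hx.units_smul_rowMul a g).tail hh h0 (fun j => hJ _ j.succ_ne_zero)
      (IsLocalRing.span_nonunits_smul_le hgen) y hy
    exact ⟨c, m, congrFun hcm⟩
end

section
/- Let $A$ be a local finite-dimensional $k$-algebra with $A/J_A \cong k$, and let $X$ be a finite-dimensional left $A$-module such that for every $t\ge 1$ there exists $(x_1,\dots,x_t)\in X^t$ with $X^t = A\cdot(x_1,\dots,x_t) + (x_1,\dots,x_t)\cdot M_t(k)$. Then $X$ is a uniserial $A$-module, i.e. its submodule lattice is a chain. -/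
section LocalBasics
variable {A : Type*} [Ring A] [IsLocalRing A]

/-- In a local ring, a one-sided inverse is two-sided: both factors of `1` are units. -/
lemma locPair {x y : A} (h : x * y = 1) : IsUnit x ∧ IsUnit y := by
  have he : (y * x) * (y * x) = y * x := by
    rw [mul_assoc, ← mul_assoc x y x, h, one_mul]
  rcases IsLocalRing.isUnit_or_isUnit_of_add_one
      (a := y * x) (b := 1 - y * x) (add_sub_cancel _ _) with hu | hu
  · have h1 : y * x = 1 := by
      have h2 : (y * x) * (y * x) = (y * x) * 1 := by rw [mul_one, he]
      exact hu.mul_left_cancel h2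
    exact ⟨⟨⟨x, y, h, h1⟩, rfl⟩, ⟨⟨y, x, h1, h⟩, rfl⟩⟩
  · exfalso
    have h0 : y * x = 0 := by
      have h2 : (1 - y * x) * (y * x) = (1 - y * x) * 0 := by
        rw [mul_zero, sub_mul, one_mul, he, sub_self]
      exact hu.mul_left_cancel h2
    have : (1 : A) = 0 := by
      calc (1 : A) = (x * y) * (x * y) := by rw [h, one_mul]
        _ = x * ((y * x) * y) := by rw [mul_assoc, ← mul_assoc y x y]
        _ = 0 := by rw [h0, zero_mul, mul_zero]
    exact one_ne_zero this

lemma locMulLeft {a : A} (ha : ¬ IsUnit a) (c : A) : ¬ IsUnit (c * a) := by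
  intro h
  refine ha (locPair (x := ↑h.unit⁻¹ * c) (y := a) ?_).2
  rw [mul_assoc]; exact h.val_inv_mul

lemma locMulRight {a : A} (ha : ¬ IsUnit a) (c : A) : ¬ IsUnit (a * c) := by
  intro h
  refine ha (locPair (x := a) (y := c * ↑h.unit⁻¹) ?_).1
  rw [← mul_assoc]; exact h.mul_val_inv

lemma locAdd {a b : A} (ha : ¬ IsUnit a) (hb : ¬ IsUnit b) : ¬ IsUnit (a + b) := by
  intro h
  have h1 : ↑h.unit⁻¹ * a + ↑h.unit⁻¹ * b = 1 := by
    rw [← mul_add]; exact h.val_inv_mul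
  rcases IsLocalRing.isUnit_or_isUnit_of_add_one h1 with hu | hu
  · exact locMulLeft ha _ hu
  · exact locMulLeft hb _ hu

/-- The ideal of nonunits of a (possibly noncommutative) local ring. -/
def nuIdeal (A : Type*) [Ring A] [IsLocalRing A] : Ideal A where
  carrier := {a | ¬ IsUnit a}
  zero_mem' := (not_isUnit_zero : ¬ IsUnit (0:A))
  add_mem' := fun ha hb => locAdd ha hb
  smul_mem' := fun c a ha => by simpa [smul_eq_mul] using locMulLeft ha c

lemma mem_nuIdeal {a : A} : a ∈ nuIdeal A ↔ ¬ IsUnit a := Iff.rfl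

end LocalBasics

section Nilpotency
variable {k A : Type*} [Field k] [Ring A] [Algebra k A] [IsLocalRing A]

lemma nak_fg : ∀ (r : ℕ) (v : Fin r → A) (N : Ideal A),
    N = Submodule.span A (Set.range v) → N ≤ nuIdeal A • N → N = ⊥ := by
  intro r
  induction r with
  | zero =>
    intro v N hN _
    rw [hN, Set.range_eq_empty, Submodule.span_empty]
  | succ r ih =>
    intro v N hN h
    have hdec : ∀ x ∈ nuIdeal A • N,
        ∃ b : Fin (r+1) → A, (∀ i, ¬ IsUnit (b i)) ∧ x = ∑ i, b i * v i := by
      intro x hx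
      refine Submodule.smul_induction_on hx ?_ ?_
      · intro a ha n hn
        rw [hN] at hn
        obtain ⟨c, hc⟩ := (Submodule.mem_span_range_iff_exists_fun A).mp hn
        refine ⟨fun i => a * c i, fun i => locMulRight ha (c i), ?_⟩
        rw [← hc, smul_eq_mul, Finset.mul_sum]
        exact Finset.sum_congr rfl fun i _ => by rw [smul_eq_mul, mul_assoc]
      · rintro x y ⟨b, hb, rfl⟩ ⟨b', hb', rfl⟩
        refine ⟨b + b', fun i => locAdd (hb i) (hb' i), ?_⟩
        rw [← Finset.sum_add_distrib]
        exact Finset.sum_congr rfl fun i _ => by rw [Pi.add_apply, add_mul]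
    have hvN : v (Fin.last r) ∈ N := by
      rw [hN]; exact Submodule.subset_span (Set.mem_range_self _)
    obtain ⟨b, hb, hbe⟩ := hdec _ (h hvN)
    have hkey : (1 - b (Fin.last r)) * v (Fin.last r)
        = ∑ i : Fin r, b i.castSucc * v i.castSucc := by
      rw [sub_mul, one_mul]
      nth_rewrite 1 [hbe]
      rw [Fin.sum_univ_castSucc]
      abel
    have hu : IsUnit (1 - b (Fin.last r)) := by
      rcases IsLocalRing.isUnit_or_isUnit_of_add_one
        (a := 1 - b (Fin.last r)) (b := b (Fin.last r)) (by rw [sub_add_cancel]) with h' | h'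
      · exact h'
      · exact absurd h' (hb _)
    have hin : v (Fin.last r) ∈ Submodule.span A (Set.range (v ∘ Fin.castSucc)) := by
      have hv2 : v (Fin.last r)
          = ↑hu.unit⁻¹ * ((1 - b (Fin.last r)) * v (Fin.last r)) := by
        rw [← mul_assoc, hu.val_inv_mul, one_mul]
      rw [hv2, hkey]
      rw [show (↑hu.unit⁻¹ : A) * (∑ i : Fin r, b i.castSucc * v i.castSucc)
        = (↑hu.unit⁻¹ : A) • (∑ i : Fin r, b i.castSucc * v i.castSucc) from rfl]
      refine Submodule.smul_mem _ _ (Submodule.sum_mem _ fun i _ => ?_)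
      rw [show b i.castSucc * v i.castSucc = b i.castSucc • v i.castSucc from rfl]
      exact Submodule.smul_mem _ _ (Submodule.subset_span ⟨i, rfl⟩)
    have hNeq : N = Submodule.span A (Set.range (v ∘ Fin.castSucc)) := by
      refine le_antisymm ?_ ?_
      · rw [hN, Submodule.span_le]
        rintro _ ⟨i, rfl⟩
        refine Fin.lastCases ?_ ?_ i
        · exact hin
        · intro j; exact Submodule.subset_span ⟨j, rfl⟩
      · refine Submodule.span_le.mpr ?_
        rintro _ ⟨i, rfl⟩
        rw [hN]
        exact Submodule.subset_span ⟨i.castSucc, rfl⟩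
    exact ih _ N hNeq h

lemma nu_nilpotent [FiniteDimensional k A] :
    ∃ n : ℕ, (fun W : Ideal A => nuIdeal A • W)^[n] ⊤ = ⊥ := by
  set F : Ideal A → Ideal A := fun W => nuIdeal A • W with hF
  have hstep : ∀ m : ℕ, F^[m+1] ⊤ = nuIdeal A • F^[m] ⊤ := by
    intro m; rw [Function.iterate_succ_apply']
  have hanti : ∀ m : ℕ, F^[m+1] ⊤ ≤ F^[m] ⊤ := by
    intro m; rw [hstep]; exact Submodule.smul_le_right
  have hmono : Monotone (fun m : ℕ => OrderDual.toDual
      ((F^[m] ⊤).restrictScalars k)) := by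
    apply monotone_nat_of_le_succ
    intro m
    exact fun x hx => hanti m hx
  obtain ⟨m, hm⟩ := IsArtinian.monotone_stabilizes
    (⟨fun m => OrderDual.toDual ((F^[m] ⊤).restrictScalars k), hmono⟩ :
      ℕ →o (Submodule k A)ᵒᵈ)
  have heq : F^[m] ⊤ = nuIdeal A • F^[m] ⊤ := by
    rw [← hstep]
    have := hm (m+1) (Nat.le_succ m)
    have h2 : ((F^[m] ⊤).restrictScalars k) = ((F^[m+1] ⊤).restrictScalars k) :=
      congrArg OrderDual.ofDual this
    exact Submodule.restrictScalars_injective k A A h2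
  have hfg : (F^[m] ⊤ : Ideal A).FG := by
    have hkfg : ((F^[m] ⊤ : Ideal A).restrictScalars k).FG := IsNoetherian.noetherian _
    obtain ⟨s, hs⟩ := hkfg
    have hsub : (↑s : Set A) ⊆ (F^[m] ⊤ : Ideal A) := by
      intro x hx
      have : x ∈ Submodule.span k (↑s : Set A) := Submodule.subset_span hx
      rw [hs] at this; exact this
    refine ⟨s, le_antisymm (Submodule.span_le.mpr hsub) ?_⟩
    intro x hx
    have hx' : x ∈ Submodule.span k (↑s : Set A) := by rw [hs]; exact hx
    have hle : Submodule.span k (↑s : Set A) ≤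
        (Submodule.span A (↑s : Set A)).restrictScalars k :=
      Submodule.span_le.mpr Submodule.subset_span
    exact hle hx'
  obtain ⟨r, v, hv⟩ := Submodule.fg_iff_exists_fin_generating_family.mp hfg
  exact ⟨m, nak_fg r v _ hv.symm (le_of_eq heq)⟩

end Nilpotency

section Rigid
variable {k A X : Type*} [Field k] [Ring A] [Algebra k A]
variable [AddCommGroup X] [Module A X]

/-- A tuple `x ∈ X^t` is rigid if every `y ∈ X^t` is of the form `c • x + x · m`. -/
def IsRigid (k A : Type*) {X : Type*} [Field k] [Ring A] [Algebra k A] [AddCommGroup X]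
    [Module A X] {t : ℕ} (x : Fin t → X) : Prop :=
  ∀ y : Fin t → X, ∃ (c : A) (m : Matrix (Fin t) (Fin t) k),
    ∀ j, y j = c • x j + ∑ i, algebraMap k A (m i j) • x i

lemma IsRigid.comp_perm {t : ℕ} {x : Fin t → X} (hx : IsRigid k A x) (τ : Equiv.Perm (Fin t)) :
    IsRigid k A (fun i => x (τ i)) := by
  intro y
  obtain ⟨c, m, hm⟩ := hx (fun i => y (τ.symm i))
  refine ⟨c, fun i j => m (τ i) (τ j), fun j => ?_⟩
  have h1 := hm (τ j)
  rw [Equiv.symm_apply_apply] at h1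
  have h2 : ∑ i, algebraMap k A (m (τ i) (τ j)) • x (τ i)
      = ∑ i, algebraMap k A (m i (τ j)) • x i :=
    Equiv.sum_comp τ (fun i => algebraMap k A (m i (τ j)) • x i)
  rw [h2]
  exact h1

/-- Rewriting a `k`-linear combination of `x i` as a combination of the sheared tuple. -/
lemma comb_shift {t : ℕ} (x : Fin t → X) (p : Fin t) (μ : Fin t → k) (hμ : μ p = 0)
    (a : Fin t → k) :
    ∑ i, algebraMap k A (a i + if i = p then (∑ l, a l * μ l) else 0) •
        (x i - algebraMap k A (μ i) • x p)
      = ∑ i, algebraMap k A (a i) • x i := by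
  have expand : ∀ (b : Fin t → k),
      ∑ i, algebraMap k A (b i) • (x i - algebraMap k A (μ i) • x p)
        = (∑ i, algebraMap k A (b i) • x i) - algebraMap k A (∑ i, b i * μ i) • x p := by
    intro b
    rw [map_sum, Finset.sum_smul, ← Finset.sum_sub_distrib]
    refine Finset.sum_congr rfl fun i _ => ?_
    rw [smul_sub, map_mul, mul_smul]
  rw [expand]
  have hsum1 : ∑ i, (a i + if i = p then (∑ l, a l * μ l) else 0) * μ i
      = ∑ i, a i * μ i := by
    rw [Finset.sum_congr rfl (fun i _ => add_mul (a i) _ (μ i)), Finset.sum_add_distrib]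
    have : ∑ i, (if i = p then (∑ l, a l * μ l) else 0) * μ i = 0 := by
      simp [ite_mul, hμ, Finset.sum_ite_eq']
    rw [this, add_zero]
  have hsum2 : ∑ i, algebraMap k A (a i + if i = p then (∑ l, a l * μ l) else 0) • x i
      = (∑ i, algebraMap k A (a i) • x i) + algebraMap k A (∑ l, a l * μ l) • x p := by
    rw [Finset.sum_congr rfl (fun i _ => by rw [map_add, add_smul]), Finset.sum_add_distrib]
    congr 1
    rw [Finset.sum_congr rfl (fun i _ => by
      rw [show (algebraMap k A (if i = p then (∑ l, a l * μ l) else 0))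
          = (if i = p then algebraMap k A (∑ l, a l * μ l) else 0) from
        by split <;> simp, ite_smul, zero_smul])]
    simp [Finset.sum_ite_eq']
  rw [hsum1, hsum2]
  abel

lemma IsRigid.shear {t : ℕ} {x : Fin t → X} (hx : IsRigid k A x) (p : Fin t) (μ : Fin t → k)
    (hμ : μ p = 0) :
    IsRigid k A (fun i => x i - algebraMap k A (μ i) • x p) := by
  intro y
  obtain ⟨c, m, hm⟩ := hx (fun j => y j + algebraMap k A (μ j) • y p)
  refine ⟨c, fun i j => (m i j - μ j * m i p) +
      (if i = p then ∑ l, (m l j - μ j * m l p) * μ l else 0), fun j => ?_⟩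
  have hyj : y j = (y j + algebraMap k A (μ j) • y p)
      - algebraMap k A (μ j) • (y p + algebraMap k A (μ p) • y p) := by
    rw [hμ]
    simp
  have hcomm : algebraMap k A (μ j) • (c • x p) = c • (algebraMap k A (μ j) • x p) := by
    rw [smul_smul, smul_smul, Algebra.commutes]
  have e1 : ∑ i, algebraMap k A (μ j) • (algebraMap k A (m i p) • x i)
      = ∑ i, algebraMap k A (μ j * m i p) • x i :=
    Finset.sum_congr rfl fun i _ => by rw [smul_smul, ← map_mul]
  have e2 : ∑ i, algebraMap k A (m i j - μ j * m i p) • x i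
      = (∑ i, algebraMap k A (m i j) • x i) - ∑ i, algebraMap k A (μ j * m i p) • x i := by
    rw [← Finset.sum_sub_distrib]
    exact Finset.sum_congr rfl fun i _ => by rw [map_sub, sub_smul]
  have lhs_eq : (c • x j + ∑ i, algebraMap k A (m i j) • x i)
        - algebraMap k A (μ j) • (c • x p + ∑ i, algebraMap k A (m i p) • x i)
      = c • (x j - algebraMap k A (μ j) • x p)
        + ∑ i, algebraMap k A (m i j - μ j * m i p) • x i := by
    rw [smul_add, hcomm, smul_sub, Finset.smul_sum, e1, e2]
    abel
  show y j = c • (x j - algebraMap k A (μ j) • x p)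
      + ∑ i, algebraMap k A ((m i j - μ j * m i p) +
        (if i = p then ∑ l, (m l j - μ j * m l p) * μ l else 0)) •
          (x i - algebraMap k A (μ i) • x p)
  rw [hyj, hm j, hm p, lhs_eq, ← comb_shift x p μ hμ (fun i => m i j - μ j * m i p)]

end Rigid

section Main
universe u
variable {k A : Type*} [Field k] [Ring A] [Algebra k A] [IsLocalRing A]

lemma nak_top {A X : Type*} [Ring A] [AddCommGroup X] [Module A X] (J : Ideal A)
    (U : Submodule A X) (h : ⊤ ≤ U ⊔ J • ⊤) :
    ∀ m : ℕ, (⊤ : Submodule A X) ≤ U ⊔ (fun W : Submodule A X => J • W)^[m] ⊤ := by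
  intro m
  induction m with
  | zero => simp [Function.iterate_zero_apply]
  | succ m ih =>
    refine h.trans (sup_le le_sup_left ?_)
    have h2 : J • (⊤ : Submodule A X) ≤ J • (U ⊔ (fun W : Submodule A X => J • W)^[m] ⊤) :=
      smul_mono_right _ ih
    refine h2.trans ?_
    rw [Submodule.smul_sup, Function.iterate_succ_apply']
    exact sup_le_sup Submodule.smul_le_right le_rfl

theorem aux (hres : ∀ a : A, ∃ c : k, ¬ IsUnit (a - algebraMap k A c)) :
    ∀ (n : ℕ) (X : Type u) [AddCommGroup X] [Module A X],
      ((fun W : Submodule A X => nuIdeal A • W)^[n] ⊤ = ⊥) →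
      (∀ t : ℕ, 1 ≤ t → ∃ x : Fin t → X, IsRigid k A x) →
      ∀ U V : Submodule A X, U ≤ V ∨ V ≤ U := by
  intro n
  induction n with
  | zero =>
    intro X _ _ hn _ U V
    rw [Function.iterate_zero_apply] at hn
    left
    have hU : U = ⊥ := le_bot_iff.mp (hn ▸ le_top)
    rw [hU]; exact bot_le
  | succ n ih =>
    intro X _ _ hn hrig U V
    by_cases hbot : (⊤ : Submodule A X) = ⊥
    · left
      have hU : U = ⊥ := le_bot_iff.mp (hbot ▸ le_top)
      rw [hU]; exact bot_le
    obtain ⟨x1, hx1⟩ := hrig 1 le_rfl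
    set x₀ : X := x1 0 with hx₀def
    have hgen : ∀ y : X, ∃ a : A, y = a • x₀ := by
      intro y
      obtain ⟨c, m, hm⟩ := hx1 (fun _ => y)
      have h0 : y = c • x1 0 + ∑ i : Fin 1, algebraMap k A (m i 0) • x1 i := hm 0
      rw [Fin.sum_univ_one] at h0
      refine ⟨c + algebraMap k A (m 0 0), ?_⟩
      rw [add_smul]
      exact h0
    set N : Submodule A X := nuIdeal A • ⊤ with hNdef
    have hdecomp : ∀ y : X, ∃ lam : k, y - algebraMap k A lam • x₀ ∈ N := by
      intro y
      obtain ⟨a, ha⟩ := hgen y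
      obtain ⟨lam, hlam⟩ := hres a
      refine ⟨lam, ?_⟩
      have h1 : y - algebraMap k A lam • x₀ = (a - algebraMap k A lam) • x₀ := by
        rw [ha, sub_smul]
      rw [h1]
      exact Submodule.smul_mem_smul hlam Submodule.mem_top
    choose Lam hLam using hdecomp
    have hscal : ∀ v : X, v ∉ N → ∀ lam : k, algebraMap k A lam • v ∈ N → lam = 0 := by
      intro v hv lam h
      by_contra hne
      apply hv
      have h2 := N.smul_mem (algebraMap k A lam⁻¹) h
      rwa [smul_smul, ← map_mul, inv_mul_cancel₀ hne, map_one, one_smul] at h2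
    have hx₀N : x₀ ∉ N := by
      intro hx₀N
      have htop : (⊤ : Submodule A X) ≤ ⊥ ⊔ nuIdeal A • ⊤ := by
        rw [bot_sup_eq]
        intro y _
        obtain ⟨a, rfl⟩ := hgen y
        exact N.smul_mem a hx₀N
      have h3 := nak_top (nuIdeal A) ⊥ htop (n+1)
      rw [hn, sup_bot_eq] at h3
      exact hbot (le_bot_iff.mp h3)
    have hmemN_iff : ∀ y : X, y ∈ N ↔ Lam y = 0 := by
      intro y
      constructor
      · intro hy
        refine hscal x₀ hx₀N (Lam y) ?_
        have h1 : algebraMap k A (Lam y) • x₀ = y - (y - algebraMap k A (Lam y) • x₀) := by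
          abel
        rw [h1]
        exact N.sub_mem hy (hLam y)
      · intro h0
        have h1 := hLam y
        rw [h0, map_zero, zero_smul, sub_zero] at h1
        exact h1
    have hproper : ∀ W : Submodule A X, W ≠ ⊤ → W ≤ N := by
      intro W hW
      by_contra hWN
      obtain ⟨u, huW, huN⟩ := SetLike.not_le_iff_exists.mp hWN
      have hlam : Lam u ≠ 0 := fun h0 => huN ((hmemN_iff u).mpr h0)
      have hx0mem : x₀ ∈ W ⊔ N := by
        have h1 : u - algebraMap k A (Lam u) • x₀ ∈ N := hLam u
        have h2 : algebraMap k A (Lam u) • x₀ ∈ W ⊔ N := by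
          have h3 : algebraMap k A (Lam u) • x₀ = u - (u - algebraMap k A (Lam u) • x₀) := by
            abel
          rw [h3]
          exact Submodule.sub_mem _ (Submodule.mem_sup_left huW) (Submodule.mem_sup_right h1)
        have h3 := Submodule.smul_mem (W ⊔ N) (algebraMap k A (Lam u)⁻¹) h2
        rwa [smul_smul, ← map_mul, inv_mul_cancel₀ hlam, map_one, one_smul] at h3
      have htop : (⊤ : Submodule A X) ≤ W ⊔ nuIdeal A • ⊤ := by
        intro y _
        obtain ⟨a, rfl⟩ := hgen y
        exact Submodule.smul_mem _ a hx0mem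
      have h4 := nak_top (nuIdeal A) W htop (n+1)
      rw [hn, sup_bot_eq] at h4
      exact hW (le_antisymm le_top h4)
    rcases eq_or_ne U ⊤ with hU | hU
    · right; rw [hU]; exact le_top
    rcases eq_or_ne V ⊤ with hV | hV
    · left; rw [hV]; exact le_top
    have hUN := hproper U hU
    have hVN := hproper V hV
    -- rigidity descends to N
    have hrigN : ∀ t : ℕ, 1 ≤ t → ∃ xx : Fin t → ↥N, IsRigid k A xx := by
      intro t _
      obtain ⟨x, hx⟩ := hrig (t+1) (by omega)
      have hex : ∃ p, x p ∉ N := by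
        by_contra hall
        push_neg at hall
        refine hx₀N ?_
        obtain ⟨c, m, hm⟩ := hx (fun _ => x₀)
        have h0 : x₀ = c • x 0 + ∑ i, algebraMap k A (m i 0) • x i := hm 0
        rw [h0]
        exact N.add_mem (N.smul_mem c (hall 0))
          (Submodule.sum_mem _ fun i _ => N.smul_mem _ (hall i))
      obtain ⟨p, hp⟩ := hex
      set τ : Equiv.Perm (Fin (t+1)) := Equiv.swap 0 p with hτdef
      set x₂ : Fin (t+1) → X := fun i => x (τ i) with hx₂def
      have hx2 : IsRigid k A x₂ := hx.comp_perm τ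
      have hx₂0 : x₂ 0 ∉ N := by
        have h1 : x₂ 0 = x p := by rw [hx₂def]; simp [hτdef, Equiv.swap_apply_left]
        rw [h1]; exact hp
      have hL0 : Lam (x₂ 0) ≠ 0 := fun h0 => hx₂0 ((hmemN_iff _).mpr h0)
      set μ : Fin (t+1) → k :=
        fun i => if i = 0 then 0 else Lam (x₂ i) * (Lam (x₂ 0))⁻¹ with hμdef
      have hμ0 : μ 0 = 0 := by rw [hμdef]; simp
      set x₃ : Fin (t+1) → X := fun i => x₂ i - algebraMap k A (μ i) • x₂ 0 with hx₃def
      have hx3 : IsRigid k A x₃ := by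
        rw [hx₃def]; exact hx2.shear 0 μ hμ0
      have hx₃0eq : x₃ 0 = x₂ 0 := by
        rw [hx₃def]; simp [hμ0]
      have hx₃0 : x₃ 0 ∉ N := by rw [hx₃0eq]; exact hx₂0
      have hx₃N : ∀ i : Fin (t+1), i ≠ 0 → x₃ i ∈ N := by
        intro i hi
        have hco : algebraMap k A (μ i) • (algebraMap k A (Lam (x₂ 0)) • x₀)
            = algebraMap k A (Lam (x₂ i)) • x₀ := by
          rw [smul_smul, ← map_mul, hμdef]
          simp only [if_neg hi]
          rw [mul_assoc, inv_mul_cancel₀ hL0, mul_one]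
        have heq : x₃ i = (x₂ i - algebraMap k A (Lam (x₂ i)) • x₀)
            - algebraMap k A (μ i) • (x₂ 0 - algebraMap k A (Lam (x₂ 0)) • x₀) := by
          rw [hx₃def]
          simp only [smul_sub, hco]
          abel
        rw [heq]
        exact N.sub_mem (hLam _) (N.smul_mem _ (hLam _))
      refine ⟨fun j => ⟨x₃ j.succ, hx₃N _ (Fin.succ_ne_zero j)⟩, ?_⟩
      intro yy
      obtain ⟨c, m, hm⟩ := hx3 (Fin.cases 0 (fun j => (yy j : X)))
      refine ⟨c, fun i j => m i.succ j.succ, fun j => ?_⟩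
      have h1 : (yy j : X) = c • x₃ j.succ + ∑ i : Fin (t+1), algebraMap k A (m i j.succ) • x₃ i :=
        hm j.succ
      rw [Fin.sum_univ_succ] at h1
      have hterm : algebraMap k A (m 0 j.succ) • x₃ 0 ∈ N := by
        have h2 : algebraMap k A (m 0 j.succ) • x₃ 0
            = (yy j : X) - c • x₃ j.succ
              - ∑ i : Fin t, algebraMap k A (m i.succ j.succ) • x₃ i.succ := by
          rw [h1]; abel
        rw [h2]
        refine N.sub_mem (N.sub_mem (yy j).2 (N.smul_mem _ (hx₃N _ (Fin.succ_ne_zero j)))) ?_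
        exact Submodule.sum_mem _ fun i _ => N.smul_mem _ (hx₃N _ (Fin.succ_ne_zero i))
      have hm0 : m 0 j.succ = 0 := hscal (x₃ 0) hx₃0 _ hterm
      apply Subtype.ext
      show (yy j : X)
        = ((c • (⟨x₃ j.succ, hx₃N _ (Fin.succ_ne_zero j)⟩ : ↥N)
            + ∑ i : Fin t, algebraMap k A (m i.succ j.succ) •
              (⟨x₃ i.succ, hx₃N _ (Fin.succ_ne_zero i)⟩ : ↥N)) : ↥N)
      push_cast
      rw [h1, hm0, map_zero, zero_smul, zero_add]
    -- the nilpotency hypothesis descends to N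
    have hiter : ∀ (q : ℕ) (W : Submodule A ↥N),
        Submodule.map N.subtype ((fun W : Submodule A ↥N => nuIdeal A • W)^[q] W)
          = (fun W : Submodule A X => nuIdeal A • W)^[q] (Submodule.map N.subtype W) := by
      intro q
      induction q with
      | zero => intro W; simp
      | succ q ihq =>
        intro W
        simp only [Function.iterate_succ_apply]
        rw [ihq (nuIdeal A • W), Submodule.map_smul'']
    have hNn : (fun W : Submodule A ↥N => nuIdeal A • W)^[n] ⊤ = ⊥ := by
      have h1 : Submodule.map N.subtype ((fun W : Submodule A ↥N => nuIdeal A • W)^[n] ⊤)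
          = (fun W : Submodule A X => nuIdeal A • W)^[n] N := by
        rw [hiter n ⊤, Submodule.map_top, Submodule.range_subtype]
      have h2 : (fun W : Submodule A X => nuIdeal A • W)^[n] N = ⊥ := by
        rw [hNdef, show (nuIdeal A • (⊤ : Submodule A X))
            = (fun W : Submodule A X => nuIdeal A • W) ⊤ from rfl,
          ← Function.iterate_succ_apply, hn]
      rw [h2] at h1
      exact Submodule.map_injective_of_injective N.injective_subtype
        (by rw [h1, Submodule.map_bot])
    have hcmp := ih ↥N hNn hrigN (Submodule.comap N.subtype U) (Submodule.comap N.subtype V)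
    have hU' : Submodule.map N.subtype (Submodule.comap N.subtype U) = U := by
      rw [Submodule.map_comap_subtype]
      exact inf_eq_right.mpr hUN
    have hV' : Submodule.map N.subtype (Submodule.comap N.subtype V) = V := by
      rw [Submodule.map_comap_subtype]
      exact inf_eq_right.mpr hVN
    rcases hcmp with h | h
    · left; rw [← hU', ← hV']; exact Submodule.map_mono h
    · right; rw [← hU', ← hV']; exact Submodule.map_mono h

end Main

/-- Let `A` be a local finite-dimensional `k`-algebra with residue field
`k` and let `X` be a finite-dimensional left `A`-module such that for every `t ≥ 1` there
exists `x ∈ X^t` with `X^t = A·x + x·M_t(k)`.  Then `X` is a uniserial `A`-module, i.e.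
its submodule lattice is a chain. -/
theorem stmt_7 {k A X : Type*} [Field k] [Ring A] [Algebra k A] [FiniteDimensional k A]
    [IsLocalRing A] [AddCommGroup X] [Module A X] [Module.Finite A X]
    -- residue field `k` : every element of `A` is a scalar modulo the radical (= nonunits)
    (hres : ∀ a : A, ∃ c : k, ¬ IsUnit (a - algebraMap k A c))
    (hrigid : ∀ t : ℕ, 1 ≤ t → ∃ x : Fin t → X,
      ∀ y : Fin t → X, ∃ (c : A) (m : Matrix (Fin t) (Fin t) k),
        ∀ j, y j = c • x j + ∑ i, algebraMap k A (m i j) • x i) :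
    ∀ U V : Submodule A X, U ≤ V ∨ V ≤ U := by
  obtain ⟨n, hn⟩ := nu_nilpotent (k := k) (A := A)
  have key : ∀ m : ℕ, (fun W : Submodule A X => nuIdeal A • W)^[m] ⊤
      ≤ ((fun W : Ideal A => nuIdeal A • W)^[m] ⊤) • (⊤ : Submodule A X) := by
    intro m
    induction m with
    | zero => simp
    | succ m ihm =>
      rw [Function.iterate_succ_apply', Function.iterate_succ_apply']
      calc nuIdeal A • ((fun W : Submodule A X => nuIdeal A • W)^[m] ⊤)
          ≤ nuIdeal A • (((fun W : Ideal A => nuIdeal A • W)^[m] ⊤) • (⊤ : Submodule A X)) :=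
            smul_mono_right _ ihm
        _ = (nuIdeal A • ((fun W : Ideal A => nuIdeal A • W)^[m] ⊤)) • (⊤ : Submodule A X) :=
            (Submodule.smul_assoc _ _ _).symm
  have hX : (fun W : Submodule A X => nuIdeal A • W)^[n] ⊤ = ⊥ := by
    have h1 := key n
    rw [hn, Submodule.bot_smul] at h1
    exact le_bot_iff.mp h1
  exact aux hres n X hX (fun t ht => hrigid t ht)
end

section
/- Let $\Sigma$ be a complete sign-coherent fan of rank 2 containing the cone generated by $(-1,0),(0,1)$ (i.e. $\Sigma\in \mathsf{c}\text{-}\mathsf{Fan}^{+-}_{sc}(2)$). Then $\Sigma$ can be obtained from the fan $\Sigma(0,0;0,0)$ (the fan with four maximal cones, the four quadrants) by a finite sequence of subdivisions, where subdivision at a cone $\mathrm{cone}\{u,v\}$ replaces it by $\mathrm{cone}\{u,u+v\}$ and $\mathrm{cone}\{v,u+v\}$. -/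
/-!
Give a ray `x` of the open fourth quadrant the height `x.1 - x.2 ≥ 2`. Let `w` be an interior
ray of maximal height, with neighbours `u, v`. Unimodularity `det u w = det w v = -1` gives
`u + v = c • w` with `c = det v u`, and comparing heights forces `c ∈ {1, 2}`. If `c = 2`, then
`u` and `w` have the same height, which then divides `det u w = -1`; impossible. Hence `w = u + v`:
deleting `w` undoes a subdivision, and we conclude by induction on the number of rays.
-/
namespace RankTwoFan

def det (u v : ℤ × ℤ) : ℤ := u.1 * v.2 - u.2 * v.1

def height (x : ℤ × ℤ) : ℤ := x.1 - x.2

def Subdivides (R R' : List (ℤ × ℤ)) : Prop :=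
  ∃ (R₁ R₂ : List (ℤ × ℤ)) (u v : ℤ × ℤ),
    R = R₁ ++ u :: v :: R₂ ∧ R' = R₁ ++ u :: (u + v) :: v :: R₂

variable {u v w : ℤ × ℤ}

lemma add_eq_det_smul_of_det_eq_neg_one (huw : det u w = -1) (hwv : det w v = -1) :
    u + v = det v u • w := by
  unfold det at *
  ext
  · simp only [Prod.fst_add, Prod.smul_fst, smul_eq_mul]
    linear_combination v.1 * huw + u.1 * hwv
  · simp only [Prod.snd_add, Prod.smul_snd, smul_eq_mul]
    linear_combination v.2 * huw + u.2 * hwv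

lemma height_add (u v : ℤ × ℤ) : height (u + v) = height u + height v := by
  simp only [height, Prod.fst_add, Prod.snd_add]; ring

lemma height_smul (c : ℤ) (w : ℤ × ℤ) : height (c • w) = c * height w := by
  simp only [height, Prod.smul_fst, Prod.smul_snd, smul_eq_mul]; ring

lemma det_add_right_self (u v : ℤ × ℤ) : det u (u + v) = det u v := by
  simp only [det, Prod.fst_add, Prod.snd_add]; ring

lemma height_dvd_det_of_height_eq (h : height u = height w) : height w ∣ det u w :=
  ⟨w.1 - u.1, by unfold height det at *; linear_combination w.1 * h⟩

theorem eq_add_of_det_eq_neg_one_of_height_le (huw : det u w = -1) (hwv : det w v = -1)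
    (hu : 0 < height u) (hv : 0 < height v) (huw_le : height u ≤ height w)
    (hvw_le : height v ≤ height w) (hw : 2 ≤ height w) : w = u + v := by
  have hsum := add_eq_det_smul_of_det_eq_neg_one huw hwv
  have hheight : height u + height v = det v u * height w := by
    rw [← height_add, hsum, height_smul]
  obtain hc | hc : det v u = 1 ∨ det v u = 2 := by
    have : 0 < det v u := by nlinarith
    have : det v u ≤ 2 := by nlinarith
    omega
  · rw [hsum, hc, one_smul]
  · rw [hc] at hheight
    have hw_dvd : height w ∣ det u w := height_dvd_det_of_height_eq (by linarith)
    rw [huw] at hw_dvd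
    have := Int.le_of_dvd one_pos (Int.dvd_neg.mp hw_dvd)
    omega

lemma Subdivides.append_right {R R' : List (ℤ × ℤ)} (S : List (ℤ × ℤ)) (h : Subdivides R R') :
    Subdivides (R ++ S) (R' ++ S) := by
  obtain ⟨R₁, R₂, u, v, rfl, rfl⟩ := h
  exact ⟨R₁, R₂ ++ S, u, v, by simp, by simp⟩

lemma two_le_height {x : ℤ × ℤ} (hx : 0 < x.1 ∧ x.2 < 0) : 2 ≤ height x := by
  unfold height; omega

lemma height_mem_Ioc_of_forall_le {M : List (ℤ × ℤ)} (hquad : ∀ w ∈ M, 0 < w.1 ∧ w.2 < 0)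
    (hw : 2 ≤ height w) (hmax : ∀ x ∈ M, height x ≤ height w) :
    ∀ x ∈ ((1, 0) : ℤ × ℤ) :: M ++ [(0, -1)], height x ∈ Set.Ioc 0 (height w) := by
  intro x hx
  simp only [List.cons_append, List.mem_cons, List.mem_append, List.not_mem_nil, or_false] at hx
  rcases hx with rfl | hx | rfl
  · simp only [height, Set.mem_Ioc] at hw ⊢; omega
  · exact ⟨by linarith [two_le_height (hquad x hx)], hmax x hx⟩
  · simp only [height, Set.mem_Ioc] at hw ⊢; omega

theorem reflTransGen_subdivides_of_isChain (M : List (ℤ × ℤ))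
    (hquad : ∀ w ∈ M, 0 < w.1 ∧ w.2 < 0)
    (hchain : (((1, 0) : ℤ × ℤ) :: M ++ [(0, -1)]).IsChain (fun u v => det u v = -1)) :
    Relation.ReflTransGen Subdivides [(1, 0), (0, -1)] ((1, 0) :: M ++ [(0, -1)]) := by
  rcases eq_or_ne M [] with rfl | hM
  · exact .refl
  obtain ⟨w, hwM, hmax⟩ := Set.exists_max_image {x | x ∈ M} height M.finite_toSet
    (List.exists_mem_of_ne_nil M hM)
  have hw := two_le_height (hquad w hwM)
  have hbound := height_mem_Ioc_of_forall_le hquad hw hmax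
  obtain ⟨A, B, rfl⟩ := List.append_of_mem hwM
  obtain ⟨P, u, hP⟩ : ∃ P u, ((1, 0) : ℤ × ℤ) :: A = P ++ [u] :=
    ⟨_, _, (List.dropLast_append_getLast (List.cons_ne_nil _ _)).symm⟩
  obtain ⟨v, S, hS⟩ : ∃ v S, B ++ [((0 : ℤ), (-1 : ℤ))] = v :: S :=
    List.exists_cons_of_ne_nil (by simp)
  have hsplit : ((1, 0) : ℤ × ℤ) :: (A ++ w :: B) ++ [(0, -1)] = P ++ u :: w :: v :: S := by
    rw [List.cons_append, List.append_assoc, List.cons_append, ← List.cons_append, hP, hS]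
    simp
  have hmerge : ((1, 0) : ℤ × ℤ) :: (A ++ B) ++ [(0, -1)] = P ++ u :: v :: S := by
    rw [List.cons_append, List.append_assoc, ← List.cons_append, hP, hS]
    simp
  rw [hsplit] at hchain hbound ⊢
  simp only [List.isChain_append_cons_cons, List.isChain_cons_cons] at hchain
  obtain ⟨hP_chain, huw, hwv, hS_chain⟩ := hchain
  have hw_eq : w = u + v :=
    eq_add_of_det_eq_neg_one_of_height_le huw hwv (hbound u (by simp)).1
      (hbound v (by simp)).1 (hbound u (by simp)).2 (hbound v (by simp)).2 hw
  have hrest := reflTransGen_subdivides_of_isChain (A ++ B)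
    (fun x hx => hquad x (by simp only [List.mem_append, List.mem_cons] at hx ⊢; tauto))
    (by
      rw [hmerge, List.isChain_append_cons_cons]
      exact ⟨hP_chain, by rw [← det_add_right_self, ← hw_eq]; exact huw, hS_chain⟩)
  rw [hmerge] at hrest
  exact hrest.tail ⟨P, S, u, v, rfl, by rw [hw_eq]⟩
termination_by M.length
decreasing_by simp_all

end RankTwoFan

/-- Every complete sign-coherent fan of rank 2 containing
`cone{(-1,0),(0,1)}` — encoded by its clockwise list of rays
`(1,0), w₁, …, w_m, (0,-1), (-1,0), (0,1)` where the `wᵢ` lie in the open fourth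
quadrant and consecutive rays form a clockwise `ℤ`-basis — is obtained from the
four-quadrant fan `Σ(0,0;0,0)` by a finite sequence of subdivisions, where a
subdivision replaces consecutive rays `u, v` by `u, u+v, v`. -/
theorem stmt_8 (M : List (ℤ × ℤ))
    (hquad : ∀ w ∈ M, 0 < w.1 ∧ w.2 < 0)
    (hchain : List.Chain' (fun u v : ℤ × ℤ => u.1 * v.2 - u.2 * v.1 = -1)
      (((1, 0) : ℤ × ℤ) :: M ++ [(0, -1), (-1, 0), (0, 1)])) :
    Relation.ReflTransGen
      (fun R R' : List (ℤ × ℤ) => ∃ (R₁ R₂ : List (ℤ × ℤ)) (u v : ℤ × ℤ),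
        R = R₁ ++ u :: v :: R₂ ∧ R' = R₁ ++ u :: (u + v) :: v :: R₂)
      [(1, 0), (0, -1), (-1, 0), (0, 1)]
      (((1, 0) : ℤ × ℤ) :: M ++ [(0, -1), (-1, 0), (0, 1)]) := by
  have hprefix : (((1, 0) : ℤ × ℤ) :: M ++ [(0, -1)]).IsChain (fun u v => RankTwoFan.det u v = -1) :=
    List.IsChain.prefix hchain ⟨[(-1, 0), (0, 1)], by simp⟩
  have hfan : Relation.ReflTransGen RankTwoFan.Subdivides
      ([(1, 0), (0, -1)] ++ [(-1, 0), (0, 1)])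
      ((((1, 0) : ℤ × ℤ) :: M ++ [(0, -1)]) ++ [(-1, 0), (0, 1)]) :=
    Relation.ReflTransGen.lift (· ++ _) (fun _ _ h => h.append_right _) _ _
      (RankTwoFan.reflTransGen_subdivides_of_isChain M hquad hprefix)
  rw [List.cons_append, List.append_assoc] at hfan
  exact hfan
end

section
/- Let $\Sigma\in\mathsf{c}\text{-}\mathsf{Fan}^{+-}_{sc}(2)$ have quiddity sequence $(a_1,\dots,a_{n-2};0,0)$, with rays $v_1=(1,0),v_2,\dots,v_{n-2}=(0,-1),v_{n-1}=(-1,0),v_n=(0,1)$. Then the rotation $\rho(\Sigma)$, obtained by replacing the ray $(0,1)$ by $(-\ell,1)$ (where $\mathrm{cone}\{(1,0),(\ell,-1)\}\in\Sigma_2$) and applying the linear map sending $(1,0)\mapsto(0,1)$, $(\ell,-1)\mapsto(1,0)$, has quiddity sequence $(a_2,\dots,a_{n-2},a_1;0,0)$. In particular $\rho^{n-2}(\Sigma)=\Sigma$. -/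
/-- Let `Σ ∈ c-Fan⁺⁻_sc(2)` have rays
`v 1 = (1,0), v 2, …, v (n-2) = (0,-1), v (n-1) = (-1,0), v n = v 0 = (0,1)` in clockwise
order and quiddity sequence `(a 1, …, a (n-2); 0, 0)`.  The rotation `ρ(Σ)` is, up to the
`GL₂(ℤ)`-transformation `(1,0) ↦ (0,1)`, `(ℓ,-1) ↦ (1,0)`, the fan with rays
`w i = v (i+1)` for `i ≠ n-1` and `w (n-1) = -v 2`; its quiddity sequence is the cyclic
shift `(a 2, …, a (n-2), a 1; 0, 0)`.  In particular `ρ^(n-2)(Σ) = Σ`, i.e. shifting the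
length-`(n-2)` quiddity list `n-2` times is the identity. -/
theorem stmt_9 (n : ℕ) (hn : 5 ≤ n) (v : ℕ → ℤ × ℤ) (a : ℕ → ℤ)
    (hv0 : v 0 = (0, 1)) (hv1 : v 1 = (1, 0))
    (hvn2 : v (n - 2) = (0, -1)) (hvn1 : v (n - 1) = (-1, 0)) (hvn : v n = (0, 1))
    (hbasis : ∀ i < n, (v i).1 * (v (i + 1)).2 - (v i).2 * (v (i + 1)).1 = -1)
    (hrec : ∀ i, 1 ≤ i → i ≤ n - 1 → a i • v i = v (i - 1) + v (i + 1))
    (hrecn : a n • v n = v (n - 1) + v 1)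
    -- the rays of `ρ(Σ)` (before the final linear identification)
    (w : ℕ → ℤ × ℤ)
    (hw : ∀ i < n, w i = if i = n - 1 then -(v 2) else v (i + 1))
    (hwn : w n = v 1) :
    -- quiddity of the rotated fan is the shifted sequence
    (∀ i, 1 ≤ i → i ≤ n - 1 → i ≠ n - 2 → a (i + 1) • w i = w (i - 1) + w (i + 1)) ∧
    (a 1 • w (n - 2) = w (n - 3) + w (n - 1)) ∧
    ((0 : ℤ) • w n = w (n - 1) + w 1) ∧
    -- in particular, `ρ^(n-2)(Σ) = Σ`: rotating the quiddity list `n-2` times is trivial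
    (∀ l : List ℤ, l.length = n - 2 → l.rotate (n - 2) = l) := by

  have hn1 : n - 1 < n := by omega
  have hn2 : n - 2 < n := by omega
  have han : a n = 0 := by
    have h := hrecn
    rw [hvn, hvn1, hv1] at h
    simpa [Prod.ext_iff] using h
  have hv2 : v 2 = (a 1, -1) := by
    have h := hrec 1 le_rfl (by omega)
    rw [hv1, hv0] at h
    have h2 : v (1 + 1) = a 1 • ((1 : ℤ), (0 : ℤ)) - ((0 : ℤ), (1 : ℤ)) :=
      eq_sub_of_add_eq' h.symm
    simpa [Prod.ext_iff] using h2
  refine ⟨?_, ?_, ?_, ?_⟩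
  · intro i h1 h2 h3
    rcases eq_or_ne i (n - 1) with rfl | hne
    · rw [show n - 1 - 1 = n - 2 by omega, show n - 1 + 1 = n by omega, hw _ hn1,
        if_pos rfl, hwn, hw _ hn2, if_neg (by omega), show n - 2 + 1 = n - 1 by omega,
        han, hvn1, hv1]
      simp [Prod.ext_iff]
    · have hi : i < n := by omega
      have hi1 : i + 1 < n := by omega
      have him : i - 1 < n := by omega
      rw [hw i hi, if_neg hne, hw _ hi1, if_neg (by omega), hw _ him, if_neg (by omega),
        show i - 1 + 1 = i by omega]
      have h := hrec (i + 1) (by omega) (by omega)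
      rwa [show i + 1 - 1 = i by omega] at h
  · rw [hw _ hn2, if_neg (by omega), show n - 2 + 1 = n - 1 by omega,
      hw (n - 3) (by omega), if_neg (by omega), show n - 3 + 1 = n - 2 by omega,
      hw _ hn1, if_pos rfl, hvn1, hvn2, hv2]
    simp [Prod.ext_iff]
  · rw [hwn, hw _ hn1, if_pos rfl, hw 1 (by omega), if_neg (by omega)]
    simp
  · intro l hl
    rw [← hl]
    exact List.rotate_length l
end

section
/- For each $n\ge 1$, the number of complete sign-coherent fans of rank 2 containing $\mathrm{cone}\{(-1,0),(0,1)\}$ and having exactly $n+3$ maximal cones equals the Catalan number $C_{n-1}=\frac{1}{n}\binom{2n-2}{n-1}$. -/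
/-!
Such a fan is a chain `(1,0) = w₀, w₁, …, w_{k+1} = (0,-1)` in the fourth quadrant in which
consecutive vectors form a clockwise `ℤ`-basis. If `k ≥ 1` the chain passes through the
diagonal `(1,-1)`: two consecutive vectors strictly on either side of the diagonal have
determinant at most `-2`. The unimodular shears `(x,y) ↦ (x-y,y)` and `(x,y) ↦ (x,y-x)` carry
chains from `(1,0)` to `(0,-1)` onto the parts of the chain before and after `(1,-1)`, so a fan
with `k` inner rays is an ordered pair of fans with `i` and `k-1-i` inner rays. Hence fans with
`k` inner rays correspond to binary trees with `k` nodes, which are counted by `catalan k`.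
-/

namespace QuadrantFan

open List

def cross (u v : ℤ × ℤ) : ℤ := u.1 * v.2 - u.2 * v.1

def IsClockwiseBasis (u v : ℤ × ℤ) : Prop := cross u v = -1

def IsFan (M : List (ℤ × ℤ)) : Prop :=
  (∀ w ∈ M, 0 < w.1 ∧ w.2 < 0) ∧ List.IsChain IsClockwiseBasis ((1, 0) :: M ++ [(0, -1)])

section Order

-- `cross u v < 0` says that `v` is clockwise from `u`, a transitive relation on a half-plane.
def Precedes (u v : ℤ × ℤ) : Prop := u.2 < u.1 ∧ v.2 < v.1 ∧ cross u v < 0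

instance : Trans Precedes Precedes Precedes where
  trans := by
    rintro u v w ⟨hu, hv, huv⟩ ⟨-, hw, hvw⟩
    refine ⟨hu, hw, ?_⟩
    have key : cross u v * (w.1 - w.2) = cross u w * (v.1 - v.2) - cross v w * (u.1 - u.2) := by
      simp only [cross]; ring
    nlinarith [mul_neg_of_neg_of_pos huv (sub_pos.2 hw), mul_pos (neg_pos.2 hvw) (sub_pos.2 hu)]

lemma pairwise_cross_neg {M : List (ℤ × ℤ)} (hM : ∀ w ∈ M, w.2 < w.1)
    (hc : List.IsChain IsClockwiseBasis M) : M.Pairwise fun u v => cross u v < 0 :=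
  (hc.imp_of_mem_imp (S := Precedes) fun u v hu hv huv =>
    ⟨hM u hu, hM v hv, by rw [IsClockwiseBasis] at huv; omega⟩).pairwise.imp fun h => h.2.2

end Order

section Diagonal

lemma cross_le_neg_two_of_straddle {u w : ℤ × ℤ} (hu₂ : u.2 ≤ 0) (hw₁ : 0 < w.1)
    (hu : 0 < u.1 + u.2) (hw : w.1 + w.2 < 0) : cross u w ≤ -2 := by
  simp only [cross]
  nlinarith [mul_le_mul_of_nonneg_right (show -u.2 + 1 ≤ u.1 by omega)
      (show 0 ≤ w.1 + 1 by omega),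
    mul_le_mul_of_nonneg_left (show w.1 + 1 ≤ -w.2 by omega) (show 0 ≤ u.1 by omega)]

lemma eq_diag_of_isClockwiseBasis {u w : ℤ × ℤ} (huw : IsClockwiseBasis u w) (hw₁ : 0 < w.1)
    (hw : w.1 + w.2 = 0) : w = (1, -1) := by
  have h : w.1 * (u.1 + u.2) = 1 := by
    simp only [IsClockwiseBasis, cross] at huw
    rw [show w.2 = -w.1 by omega] at huw
    linarith
  have := Int.eq_one_of_mul_eq_one_right hw₁.le h
  ext <;> simp <;> omega

lemma diag_mem_of_isChain {M : List (ℤ × ℤ)} {u : ℤ × ℤ} (hu₂ : u.2 ≤ 0)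
    (hu : 0 < u.1 + u.2) (hM : ∀ w ∈ M, 0 < w.1 ∧ w.2 < 0)
    (hc : List.IsChain IsClockwiseBasis (u :: M ++ [(0, -1)])) (hne : M ≠ []) : (1, -1) ∈ M := by
  induction M generalizing u with
  | nil => exact absurd rfl hne
  | cons w M ih =>
    rw [cons_append, cons_append, isChain_cons_cons] at hc
    obtain ⟨huw, hc⟩ := hc
    obtain ⟨hw₁, hw₂⟩ := hM w mem_cons_self
    rcases lt_trichotomy 0 (w.1 + w.2) with hpos | hzero | hneg
    · rcases eq_or_ne M [] with rfl | hM'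
      · simp only [nil_append, isChain_pair, IsClockwiseBasis, cross] at hc
        omega
      · exact mem_cons_of_mem _ (ih hw₂.le hpos (fun x hx => hM x (mem_cons_of_mem _ hx)) hc hM')
    · rw [eq_diag_of_isClockwiseBasis huw hw₁ hzero.symm]
      exact mem_cons_self
    · have := cross_le_neg_two_of_straddle hu₂ hw₁ hu hneg
      rw [huw] at this
      omega

lemma diag_mem {M : List (ℤ × ℤ)} (hM : IsFan M) (hne : M ≠ []) : (1, -1) ∈ M :=
  diag_mem_of_isChain (u := (1, 0)) le_rfl one_pos hM.1 hM.2 hne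

end Diagonal

section Shears

def shearX : ℤ × ℤ ≃ ℤ × ℤ where
  toFun w := (w.1 - w.2, w.2)
  invFun w := (w.1 + w.2, w.2)
  left_inv w := by simp
  right_inv w := by simp

def shearY : ℤ × ℤ ≃ ℤ × ℤ where
  toFun w := (w.1, w.2 - w.1)
  invFun w := (w.1, w.2 + w.1)
  left_inv w := by simp
  right_inv w := by simp

lemma isChain_map_iff {f : ℤ × ℤ → ℤ × ℤ} (hf : ∀ u v, cross (f u) (f v) = cross u v)
    {l : List (ℤ × ℤ)} :
    List.IsChain IsClockwiseBasis (l.map f) ↔ List.IsChain IsClockwiseBasis l := by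
  simp only [isChain_map, IsClockwiseBasis, hf]
  rfl

lemma isFan_iff_shearX {M : List (ℤ × ℤ)} : IsFan M ↔
    (∀ w ∈ M.map shearX, 0 < w.1 + w.2 ∧ w.2 < 0) ∧
      List.IsChain IsClockwiseBasis ((1, 0) :: M.map shearX ++ [(1, -1)]) := by
  have h : (1, 0) :: M.map shearX ++ [(1, -1)] = ((1, 0) :: M ++ [(0, -1)]).map shearX := by
    simp [shearX]
  rw [h, isChain_map_iff fun u v => by simp only [cross, shearX, Equiv.coe_fn_mk]; ring,
    IsFan, forall_mem_map]
  refine Iff.and (forall₂_congr fun w _ => ?_) Iff.rfl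
  simp only [shearX, Equiv.coe_fn_mk]
  omega

lemma isFan_iff_shearY {M : List (ℤ × ℤ)} : IsFan M ↔
    (∀ w ∈ M.map shearY, 0 < w.1 ∧ w.1 + w.2 < 0) ∧
      List.IsChain IsClockwiseBasis ((1, -1) :: M.map shearY ++ [(0, -1)]) := by
  have h : (1, -1) :: M.map shearY ++ [(0, -1)] = ((1, 0) :: M ++ [(0, -1)]).map shearY := by
    simp [shearY]
  rw [h, isChain_map_iff fun u v => by simp only [cross, shearY, Equiv.coe_fn_mk]; ring,
    IsFan, forall_mem_map]
  refine Iff.and (forall₂_congr fun w _ => ?_) Iff.rfl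
  simp only [shearY, Equiv.coe_fn_mk]
  omega

end Shears

section Glue

def glue (M₁ M₂ : List (ℤ × ℤ)) : List (ℤ × ℤ) :=
  M₁.map shearX ++ (1, -1) :: M₂.map shearY

lemma length_glue (M₁ M₂ : List (ℤ × ℤ)) :
    (glue M₁ M₂).length = M₁.length + M₂.length + 1 := by
  simp [glue]; omega

lemma isFan_glue {M₁ M₂ : List (ℤ × ℤ)} (h₁ : IsFan M₁) (h₂ : IsFan M₂) :
    IsFan (glue M₁ M₂) := by
  rw [isFan_iff_shearX] at h₁
  rw [isFan_iff_shearY] at h₂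
  refine ⟨fun w hw => ?_, ?_⟩
  · simp only [glue, mem_append, mem_cons] at hw
    rcases hw with hw | rfl | hw
    · have := h₁.1 w hw; omega
    · decide
    · have := h₂.1 w hw; omega
  · rw [glue, cons_append, append_assoc, cons_append, isChain_cons_split]
    exact ⟨h₁.2, h₂.2⟩

lemma glue_inj {M₁ M₂ N₁ N₂ : List (ℤ × ℤ)} (h₁ : ∀ w ∈ M₁, 0 < w.1 ∧ w.2 < 0)
    (h₂ : ∀ w ∈ M₂, 0 < w.1 ∧ w.2 < 0) : glue M₁ M₂ = glue N₁ N₂ ↔ M₁ = N₁ ∧ M₂ = N₂ := by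
  have hX : (1, -1) ∉ M₁.map shearX := by
    simp only [mem_map, not_exists, not_and]
    intro w hw h
    have := h₁ w hw
    simp only [shearX, Equiv.coe_fn_mk, Prod.ext_iff] at h
    omega
  have hY : (1, -1) ∉ M₂.map shearY := by
    simp only [mem_map, not_exists, not_and]
    intro w hw h
    have := h₂ w hw
    simp only [shearY, Equiv.coe_fn_mk, Prod.ext_iff] at h
    omega
  rw [glue, glue, append_cons_inj_of_notMem hX hY, map_inj_right shearX.injective,
    map_inj_right shearY.injective]
  simp

lemma exists_glue {M : List (ℤ × ℤ)} (hM : IsFan M) (hne : M ≠ []) :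
    ∃ M₁ M₂, IsFan M₁ ∧ IsFan M₂ ∧ glue M₁ M₂ = M := by
  obtain ⟨s, t, rfl⟩ := append_of_mem (diag_mem hM hne)
  have hopen := hM.1
  simp only [mem_append, mem_cons] at hopen
  have hord := pairwise_cross_neg (fun w hw => by
      have := hM.1 w hw; omega) (hM.2.infix ⟨[(1, 0)], [(0, -1)], by simp⟩)
  simp only [pairwise_append, pairwise_cons, mem_cons] at hord
  have hchain := hM.2
  rw [cons_append, append_assoc, cons_append, isChain_cons_split] at hchain
  refine ⟨s.map shearX.symm, t.map shearY.symm, ?_, ?_, by simp [glue]⟩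
  · rw [isFan_iff_shearX, map_map, shearX.self_comp_symm, map_id]
    refine ⟨fun w hw => ?_, hchain.1⟩
    have h := hord.2.2 w hw (1, -1) (Or.inl rfl)
    have := hopen w (Or.inl hw)
    simp only [cross] at h
    omega
  · rw [isFan_iff_shearY, map_map, shearY.self_comp_symm, map_id]
    refine ⟨fun w hw => ?_, by simpa using hchain.2⟩
    have h := hord.2.1.1 w hw
    have := hopen w (Or.inr (Or.inr hw))
    simp only [cross] at h
    omega

end Glue

section Trees

def ofTree : BinaryTree Unit → List (ℤ × ℤ)
  | .nil => []
  | .node _ l r => glue (ofTree l) (ofTree r)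

lemma isFan_ofTree : ∀ t : BinaryTree Unit, IsFan (ofTree t)
  | .nil => by simp [IsFan, ofTree, IsClockwiseBasis, cross]
  | .node _ l r => isFan_glue (isFan_ofTree l) (isFan_ofTree r)

lemma length_ofTree : ∀ t : BinaryTree Unit, (ofTree t).length = t.numNodes
  | .nil => rfl
  | .node _ l r => by simp [ofTree, length_glue, length_ofTree l, length_ofTree r]

lemma ofTree_injective : Function.Injective ofTree := by
  intro t
  induction t with
  | nil => rintro (_ | _) h <;> simp_all [ofTree, glue]
  | node _ l r ihl ihr =>
    rintro (_ | ⟨_, l', r'⟩) h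
    · simp [ofTree, glue] at h
    · obtain ⟨hl, hr⟩ := (glue_inj (isFan_ofTree l).1 (isFan_ofTree r).1).1 h
      rw [ihl hl, ihr hr]

lemma exists_ofTree {M : List (ℤ × ℤ)} (hM : IsFan M) : ∃ t, ofTree t = M := by
  induction h : M.length using Nat.strong_induction_on generalizing M with
  | _ k ih =>
    rcases eq_or_ne M [] with rfl | hne
    · exact ⟨.nil, rfl⟩
    obtain ⟨M₁, M₂, h₁, h₂, rfl⟩ := exists_glue hM hne
    rw [length_glue] at h
    obtain ⟨l, rfl⟩ := ih _ (by omega) h₁ rfl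
    obtain ⟨r, rfl⟩ := ih _ (by omega) h₂ rfl
    exact ⟨.node () l r, rfl⟩

theorem card_isFan (k : ℕ) : Nat.card {M // IsFan M ∧ M.length = k} = catalan k := by
  rw [← BinaryTree.treesOfNumNodesEq_card_eq_catalan, ← Nat.card_eq_finsetCard]
  symm
  refine Nat.card_congr (Equiv.ofBijective (fun t => ⟨ofTree t, isFan_ofTree t, ?_⟩) ⟨?_, ?_⟩)
  · rw [length_ofTree, BinaryTree.mem_treesOfNumNodesEq.1 t.2]
  · exact fun t t' h => Subtype.ext (ofTree_injective (congrArg Subtype.val h))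
  · rintro ⟨M, hM, rfl⟩
    obtain ⟨t, rfl⟩ := exists_ofTree hM
    exact ⟨⟨t, BinaryTree.mem_treesOfNumNodesEq.2 (length_ofTree t).symm⟩, rfl⟩

end Trees

end QuadrantFan

open QuadrantFan in
/-- For each `n ≥ 1`, the number of complete sign-coherent fans of
rank 2 containing `cone{(-1,0),(0,1)}` and having exactly `n+3` maximal cones equals the
Catalan number `C_(n-1)`.  Such a fan is encoded by its list `M` of rays in the open
fourth quadrant (the full clockwise ray list being `(1,0), M, (0,-1), (-1,0), (0,1)`,
with consecutive rays forming a clockwise `ℤ`-basis); it has `M.length + 4` maximal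
cones. -/
theorem stmt_11 (n : ℕ) (hn : 1 ≤ n) :
    Nat.card {M : List (ℤ × ℤ) //
      (∀ w ∈ M, 0 < w.1 ∧ w.2 < 0) ∧
      List.Chain' (fun u v : ℤ × ℤ => u.1 * v.2 - u.2 * v.1 = -1)
        (((1, 0) : ℤ × ℤ) :: M ++ [(0, -1), (-1, 0), (0, 1)]) ∧
      M.length + 4 = n + 3} = catalan (n - 1) := by
  rw [← card_isFan]
  refine Nat.card_congr (Equiv.subtypeEquivRight fun M => ?_)
  have hclose : List.IsChain IsClockwiseBasis ((1, 0) :: M ++ [(0, -1), (-1, 0), (0, 1)]) ↔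
      List.IsChain IsClockwiseBasis ((1, 0) :: M ++ [(0, -1)]) := by
    simp [IsClockwiseBasis, cross]
  rw [IsFan, and_assoc]
  exact Iff.rfl.and (hclose.and (by omega))
end
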